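/- Let σ ⊆ ℚⁿ be an n-dimensional pointed polyhedral cone and P = Q + σ∨ an integral σ∨-polyhedron (Q a polytope with vertices in ℤⁿ). Then for every integer e ≥ n−1, the polyhedron eP is normal: for all s ≥ 1, (s·(eP)) ∩ ℤⁿ = {m₁ + ⋯ + m_s : mᵢ ∈ (eP) ∩ ℤⁿ}. -/

import Mathlib

open scoped Pointwise
open Finset

namespace Paper

/-- Standard pairing on `ℚⁿ`. -/
def dot {n : ℕ} (m v : Fin n → ℚ) : ℚ := ∑ i, m i * v i

/-- Dual cone `σ∨ = {m | ∀ v ∈ σ, ⟨m,v⟩ ≥ 0}`. -/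
def dualCone {n : ℕ} (σ : Set (Fin n → ℚ)) : Set (Fin n → ℚ) :=
  {m | ∀ v ∈ σ, 0 ≤ dot m v}

/-- A polyhedral cone: the cone generated by finitely many vectors. -/
def IsPolyhedralCone {n : ℕ} (σ : Set (Fin n → ℚ)) : Prop :=
  ∃ (k : ℕ) (g : Fin k → Fin n → ℚ),
    σ = {v | ∃ c : Fin k → ℚ, (∀ i, 0 ≤ c i) ∧ v = ∑ i, c i • g i}

/-- A pointed (strongly convex) cone contains no line. -/
def Pointed {n : ℕ} (σ : Set (Fin n → ℚ)) : Prop := ∀ v ∈ σ, -v ∈ σ → v = 0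

/-- The canonical embedding `ℤⁿ → ℚⁿ`. -/
def Lq {n : ℕ} (m : Fin n → ℤ) : Fin n → ℚ := fun i => (m i : ℚ)

/-- A rational vector is a lattice point if all coordinates are integers. -/
def IsLatticePt {n : ℕ} (v : Fin n → ℚ) : Prop := ∀ i, ∃ z : ℤ, v i = (z : ℚ)

/-- A `σ`-polyhedron: Minkowski sum of a (nonempty) polytope with the cone `σ`. -/
def IsSigmaPolyhedron {n : ℕ} (σ Δ : Set (Fin n → ℚ)) : Prop :=
  ∃ F : Finset (Fin n → ℚ), F.Nonempty ∧ Δ = convexHull ℚ (↑F : Set (Fin n → ℚ)) + σ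

/-- An integral `σv`-polyhedron: Minkowski sum of a lattice polytope with `σv`. -/
def IsIntegralPoly {n : ℕ} (σv P : Set (Fin n → ℚ)) : Prop :=
  ∃ F : Finset (Fin n → ℤ), F.Nonempty ∧ P = convexHull ℚ (Lq '' (↑F : Set (Fin n → ℤ))) + σv

/-- The `e`-fold Minkowski sum `eP` of `P`, with the convention `0P = σv`. -/
def mink {n : ℕ} (σv P : Set (Fin n → ℚ)) : ℕ → Set (Fin n → ℚ)
  | 0 => σv
  | 1 => P
  | (e + 2) => mink σv P (e + 1) + P

/-- The semigroup `σ∨ ∩ ℤⁿ` of lattice points of the dual cone. -/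
def latticeDual {n : ℕ} (σ : Set (Fin n → ℚ)) : AddSubmonoid (Fin n → ℤ) where
  carrier := {m | Lq m ∈ dualCone σ}
  zero_mem' := by
    intro v hv
    simp [dot, Lq]
  add_mem' := by
    intro a b ha hb v hv
    have h1 := ha v hv
    have h2 := hb v hv
    have h : dot (Lq (a + b)) v = dot (Lq a) v + dot (Lq b) v := by
      simp only [dot, Lq, Pi.add_apply]
      rw [← Finset.sum_add_distrib]
      apply Finset.sum_congr rfl
      intro i _
      push_cast
      ring
    rw [Set.mem_setOf_eq] at *
    simpa [dualCone, h] using add_nonneg h1 h2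

/-- The monomial `χ^m` in the semigroup algebra `k[σ∨ ∩ ℤⁿ]`. -/
noncomputable def mono (k : Type*) [CommRing k] {n : ℕ} (σ : Set (Fin n → ℚ))
    (m : latticeDual σ) : AddMonoidAlgebra k (latticeDual σ) :=
  AddMonoidAlgebra.single m 1

/-- The monomial ideal `I[P]` generated by the monomials `χ^m`, `m ∈ P ∩ ℤⁿ`. -/
noncomputable def idealOf (k : Type*) [CommRing k] {n : ℕ} (σ : Set (Fin n → ℚ))
    (P : Set (Fin n → ℚ)) : Ideal (AddMonoidAlgebra k (latticeDual σ)) :=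
  Ideal.span {f | ∃ m : latticeDual σ, Lq (m : Fin n → ℤ) ∈ P ∧ f = mono k σ m}

/-- `a` satisfies an equation of integral dependence over the ideal `I`:
`a^r + λ₁ a^(r-1) + ⋯ + λ_r = 0` with `λᵢ ∈ Iⁱ`. -/
def IntegralOverIdeal {A : Type*} [CommRing A] (I : Ideal A) (a : A) : Prop :=
  ∃ r : ℕ, 0 < r ∧ ∃ c : ℕ → A, (∀ i ∈ Finset.Icc 1 r, c i ∈ I ^ i) ∧
    a ^ r + ∑ i ∈ Finset.Icc 1 r, c i * a ^ (r - i) = 0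

/-- A monomial (torus-homogeneous) ideal of `k[σ∨ ∩ ℤⁿ]`. -/
def IsMonomialIdeal (k : Type*) [CommRing k] {n : ℕ} (σ : Set (Fin n → ℚ))
    (I : Ideal (AddMonoidAlgebra k (latticeDual σ))) : Prop :=
  ∃ S : Set (latticeDual σ), I = Ideal.span {f | ∃ m ∈ S, f = mono k σ m}

end Paper

/-!
Write `P = Q + C` with `Q` the lattice polytope and `C = σ∨`; for convex `Q` the `k`-fold sum of
`P` is `kQ + C`. The heart of the proof is a peeling step: if `c ≥ n`, every lattice point of
`cQ + C` is a lattice point of `Q` plus a lattice point of `(c - 1)Q + C`. Peeling `e` lattice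
points of `Q` off a lattice point of `s(eP) = (se)Q + C` leaves one of `(s - 1)eQ + C`, and the
peeling is allowed because `(s - 1)e + 1 ≥ n` when `s ≥ 2` and `e ≥ n - 1`.

For the peeling step write the point as `∑ aᵢ pᵢ + v` with affinely independent lattice points
`pᵢ` of `Q` (Carathéodory), `∑ aᵢ = c` and `v ∈ C`. A weight `aⱼ ≥ 1` lets us peel off `pⱼ`.
Otherwise the simplex is full-dimensional and `c = n`; moving `v` into the weights until it is used
up or a weight vanishes either produces a weight `≥ 1` or a representation `∑ bᵢ pᵢ` with all
`0 < bᵢ < 1`. Then `t = ∑ pᵢ - ∑ bᵢ pᵢ` is a lattice point of the simplex, and replacing a suitable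
vertex `pⱼ` by `t` gives a lattice simplex that still works but misses the lattice point `pⱼ`:
induct on the number of lattice points.
-/

section Weights

variable {𝕜 ι : Type*} [Field 𝕜] [LinearOrder 𝕜] [IsStrictOrderedRing 𝕜] [Fintype ι]

theorem exists_nonneg_add_smul_eq_zero {a d : ι → 𝕜} (ha : 0 ≤ a) (hd : ∃ i, d i < 0) :
    ∃ t : 𝕜, 0 ≤ t ∧ 0 ≤ a + t • d ∧ ∃ i, a i + t * d i = 0 := by
  classical
  obtain ⟨i, hi, hmin⟩ := Finset.exists_min_image {i | d i < 0} (fun i => a i / -d i)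
    (by simpa [Finset.Nonempty] using hd)
  simp only [Finset.mem_filter, Finset.mem_univ, true_and] at hi hmin
  have ht : 0 ≤ a i / -d i := div_nonneg (ha i) (neg_pos.2 hi).le
  refine ⟨a i / -d i, ht, fun k => ?_, i, ?_⟩
  · simp only [Pi.zero_apply, Pi.add_apply, Pi.smul_apply, smul_eq_mul]
    rcases lt_or_ge (d k) 0 with hk | hk
    · nlinarith [(le_div_iff₀ (neg_pos.2 hk)).1 (hmin k hk)]
    · exact add_nonneg (ha k) (mul_nonneg ht hk)
  · rw [div_neg, neg_mul, div_mul_cancel₀ _ hi.ne, add_neg_cancel]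

theorem pos_of_forall_lt_one {b : ι → 𝕜} (hb : ∀ i, b i < 1)
    (hsum : ∑ i, b i + 1 = Fintype.card ι) (hcard : 1 < Fintype.card ι) (i : ι) : 0 < b i := by
  classical
  have hne : (univ.erase i).Nonempty := by
    rw [← Finset.card_pos, Finset.card_erase_of_mem (mem_univ i), Finset.card_univ]; omega
  have hlt : ∑ k ∈ univ.erase i, b k < ∑ _k ∈ univ.erase i, (1 : 𝕜) :=
    Finset.sum_lt_sum_of_nonempty hne fun k _ => hb k
  rw [Finset.sum_const, Finset.card_erase_of_mem (mem_univ i), Finset.card_univ,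
    nsmul_one, Nat.cast_sub hcard.le, Nat.cast_one] at hlt
  linarith [Finset.add_sum_erase univ b (mem_univ i)]

end Weights

section Hull

variable {𝕜 E ι : Type*} [Field 𝕜] [LinearOrder 𝕜] [IsStrictOrderedRing 𝕜]
  [AddCommGroup E] [Module 𝕜 E] [Fintype ι]

theorem sum_smul_mem_smul_convexHull [Nonempty ι] {w : ι → 𝕜} (hw : 0 ≤ w) (p : ι → E) :
    ∑ i, w i • p i ∈ (∑ i, w i) • convexHull 𝕜 (Set.range p) := by
  rcases (Finset.sum_nonneg fun i _ => hw i).eq_or_lt with h | h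
  · have hw0 : ∀ i, w i = 0 := fun i =>
      (Finset.sum_eq_zero_iff_of_nonneg fun i _ => hw i).1 h.symm i (mem_univ i)
    rw [← h, Set.zero_smul_set ((Set.range_nonempty p).mono (subset_convexHull 𝕜 _))]
    simp [hw0]
  · refine ⟨univ.centerMass w p, univ.centerMass_mem_convexHull (fun i _ => hw i) h
      fun i _ => Set.mem_range_self i, ?_⟩
    simp only [Finset.centerMass, smul_smul, mul_inv_cancel₀ h.ne', one_smul]

theorem sum_smul_add_sub_mem_smul_convexHull_add {C : Set E} {a : ι → 𝕜} (ha : 0 ≤ a) {j : ι}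
    (hj : 1 ≤ a j) (p : ι → E) {v : E} (hv : v ∈ C) :
    ∑ i, a i • p i + v - p j ∈ (∑ i, a i - 1) • convexHull 𝕜 (Set.range p) + C := by
  classical
  have : Nonempty ι := ⟨j⟩
  have ha' : 0 ≤ a - Pi.single j 1 := fun i => by
    rcases eq_or_ne i j with rfl | h
    · simpa using hj
    · simpa [h] using ha i
  convert Set.add_mem_add (sum_smul_mem_smul_convexHull ha' p) hv using 1
  · simp
  · simp only [Pi.sub_apply, Pi.single_apply, sub_smul, ite_smul, one_smul, zero_smul,
      Finset.sum_sub_distrib, Finset.sum_ite_eq', mem_univ, ↓reduceIte]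
    abel

end Hull

section Caratheodory

universe u

variable {𝕜 : Type*} {E : Type u} [Field 𝕜] [LinearOrder 𝕜] [IsStrictOrderedRing 𝕜]
  [AddCommGroup E] [Module 𝕜 E]

theorem exists_affineIndependent_of_mem_smul_convexHull_add {s C : Set E} {c : 𝕜} (hc : 0 ≤ c)
    {x : E} (hx : x ∈ c • convexHull 𝕜 s + C) :
    ∃ (ι : Type u) (_ : Fintype ι) (p : ι → E) (a : ι → 𝕜), Set.range p ⊆ s ∧
      AffineIndependent 𝕜 p ∧ 0 ≤ a ∧ ∑ i, a i = c ∧ ∃ v ∈ C, x = ∑ i, a i • p i + v := by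
  obtain ⟨_, ⟨q, hq, rfl⟩, v, hv, rfl⟩ := hx
  obtain ⟨ι, _, p, w, hps, hp, hw0, hw1, rfl⟩ := eq_pos_convex_span_of_mem_convexHull hq
  exact ⟨ι, inferInstance, p, c • w, hps, hp, fun i => mul_nonneg hc (hw0 i).le,
    by simp [← Finset.mul_sum, hw1], v, hv, by simp [Finset.smul_sum, smul_smul]⟩

theorem AffineIndependent.card_eq_of_forall_lt_one [FiniteDimensional 𝕜 E] {ι : Type*}
    [Fintype ι] {p : ι → E} (hp : AffineIndependent 𝕜 p) {c : ℕ}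
    (hc : Module.finrank 𝕜 E ≤ c + 1) {a : ι → 𝕜} (ha : ∀ i, a i < 1)
    (hsum : ∑ i, a i = c + 1) :
    Fintype.card ι = Module.finrank 𝕜 E + 1 ∧ Fintype.card ι = c + 2 := by
  have hne : (univ : Finset ι).Nonempty := by
    by_contra h
    rw [Finset.not_nonempty_iff_eq_empty.1 h, Finset.sum_empty] at hsum
    linarith [(c.cast_nonneg : (0 : 𝕜) ≤ c)]
  have hlt : ((c + 1 : ℕ) : 𝕜) < Fintype.card ι := by
    calc ((c + 1 : ℕ) : 𝕜) = ∑ i, a i := by push_cast; exact hsum.symm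
      _ < ∑ _i : ι, (1 : 𝕜) := Finset.sum_lt_sum_of_nonempty hne fun i _ => ha i
      _ = Fintype.card ι := by simp
  have hle := hp.card_le_finrank_succ.trans
    (Nat.succ_le_succ (Submodule.finrank_le (vectorSpan 𝕜 (Set.range p))))
  have : c + 1 < Fintype.card ι := by exact_mod_cast hlt
  omega

end Caratheodory

theorem convexHull_range_update_subset {𝕜 E ι : Type*} [Semiring 𝕜] [PartialOrder 𝕜]
    [AddCommMonoid E] [Module 𝕜 E] [DecidableEq ι] {p : ι → E} {t : E}
    (ht : t ∈ convexHull 𝕜 (Set.range p)) (j : ι) :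
    convexHull 𝕜 (Set.range (Function.update p j t)) ⊆ convexHull 𝕜 (Set.range p) :=
  convexHull_min (Set.range_subset_iff.2 fun i => by
    rcases eq_or_ne i j with rfl | h
    · simpa using ht
    · simpa [h] using subset_convexHull 𝕜 _ (Set.mem_range_self i)) (convex_convexHull 𝕜 _)

section Simplex

variable {𝕜 E ι : Type*} [Field 𝕜] [LinearOrder 𝕜] [IsStrictOrderedRing 𝕜]
  [AddCommGroup E] [Module 𝕜 E] [Fintype ι]

theorem AffineBasis.absorb_into_weights (B : AffineBasis ι 𝕜 E) {C : PointedCone 𝕜 E}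
    {a : ι → 𝕜} (ha : 0 ≤ a) {v : E} (hv : v ∈ C) :
    ∃ b : ι → 𝕜, 0 ≤ b ∧ ∑ i, b i = ∑ i, a i ∧ ∃ w ∈ C,
      ∑ i, a i • B i + v = ∑ i, b i • B i + w ∧ (w = 0 ∨ ∃ i, b i = 0) := by
  set d : ι → 𝕜 := fun i => B.coord i v - B.coord i 0
  have hd : ∑ i, d i = 0 := by
    simp only [d, Finset.sum_sub_distrib, B.sum_coord_apply_eq_one, sub_self]
  have hvd : ∑ i, d i • B i = v := by
    simp only [d, sub_smul, Finset.sum_sub_distrib, B.linear_combination_coord_eq_self, sub_zero]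
  by_cases had : 0 ≤ a + d
  · refine ⟨a + d, had, by simp [Finset.sum_add_distrib, hd], 0, C.zero_mem, ?_, Or.inl rfl⟩
    simp [add_smul, Finset.sum_add_distrib, hvd]
  obtain ⟨k, hk⟩ : ∃ k, a k + d k < 0 := by simpa [Pi.le_def] using had
  have hak : 0 ≤ a k := ha k
  obtain ⟨t, ht0, hnn, i, hi⟩ := exists_nonneg_add_smul_eq_zero ha ⟨k, by linarith⟩ (d := d)
  have htk : 0 ≤ a k + t * d k := hnn k
  have ht1 : t ≤ 1 := by nlinarith
  refine ⟨a + t • d, hnn, ?_, (1 - t) • v, C.smul_mem (sub_nonneg.2 ht1) hv, ?_, Or.inr ⟨i, hi⟩⟩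
  · simp [Finset.sum_add_distrib, ← Finset.mul_sum, hd]
  · simp only [Pi.add_apply, Pi.smul_apply, smul_eq_mul, add_smul, mul_smul,
      Finset.sum_add_distrib, ← Finset.smul_sum, hvd, sub_smul, one_smul]
    abel

theorem AffineBasis.notMem_convexHull_range_update [DecidableEq ι] (B : AffineBasis ι 𝕜 E)
    {β : ι → 𝕜} (hβ : 0 ≤ β) (hβsum : ∑ i, β i = 1) {j : ι} (hj : β j < 1) :
    B j ∉ convexHull 𝕜 (Set.range (Function.update B j (∑ i, β i • B i))) := by
  have hcoord : B.coord j (∑ i, β i • B i) = β j := by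
    rw [← univ.affineCombination_eq_linear_combination _ _ hβsum,
      B.coord_apply_combination_of_mem (mem_univ j) hβsum]
  have hsub : convexHull 𝕜 (Set.range (Function.update B j (∑ i, β i • B i))) ⊆
      B.coord j ⁻¹' Set.Iic (β j) := by
    refine convexHull_min (Set.range_subset_iff.2 fun i => ?_) ((convex_Iic _).affine_preimage _)
    rcases eq_or_ne i j with rfl | h
    · simp [hcoord]
    · simpa [h, B.coord_apply_ne h.symm] using hβ j
  intro hmem
  have := hsub hmem
  simp only [Set.mem_preimage, B.coord_apply_eq, Set.mem_Iic] at this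
  linarith

theorem AffineBasis.exists_exchange_vertex [DecidableEq ι] (B : AffineBasis ι 𝕜 E) {b : ι → 𝕜}
    (hb0 : ∀ i, 0 < b i) (hb1 : ∀ i, b i ≤ 1) (hsum : ∑ i, b i + 1 = Fintype.card ι) {t : E}
    (ht : ∑ i, b i • B i + t = ∑ i, B i) :
    ∃ j, ∑ i, b i • B i ∈ (∑ i, b i) • convexHull 𝕜 (Set.range (Function.update B j t)) ∧
      B j ∉ convexHull 𝕜 (Set.range (Function.update B j t)) ∧
      convexHull 𝕜 (Set.range (Function.update B j t)) ⊆ convexHull 𝕜 (Set.range B) := by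
  set β : ι → 𝕜 := fun i => 1 - b i
  have hβ0 : 0 ≤ β := fun i => sub_nonneg.2 (hb1 i)
  have hβsum : ∑ i, β i = 1 := by
    simp only [β, Finset.sum_sub_distrib, Finset.sum_const, Finset.card_univ, nsmul_one]
    linarith
  have htβ : t = ∑ i, β i • B i := by
    simp only [β, sub_smul, one_smul, Finset.sum_sub_distrib, ← ht]
    abel
  obtain ⟨i₀, hi₀⟩ : ∃ i, 0 < β i := by
    by_contra! h
    linarith [Finset.sum_nonpos fun i (_ : i ∈ univ) => h i]
  obtain ⟨s, hs0, hg0, j, hj⟩ := exists_nonneg_add_smul_eq_zero (d := -β)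
    (fun i => (hb0 i).le) ⟨i₀, neg_neg_iff_pos.2 hi₀⟩
  set g := b + s • -β
  have hgj : g j = 0 := hj
  have hgB : ∑ i, g i • Function.update B j t i = ∑ i, g i • B i := by
    refine Finset.sum_congr rfl fun i _ => ?_
    rcases eq_or_ne i j with rfl | h
    · rw [hgj, zero_smul, zero_smul]
    · rw [Function.update_of_ne h]
  have hbB : ∑ i, b i • B i = ∑ i, g i • Function.update B j t i + s • Function.update B j t j := by
    rw [hgB, Function.update_self, htβ, Finset.smul_sum, ← Finset.sum_add_distrib]
    refine Finset.sum_congr rfl fun i _ => ?_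
    simp only [g, Pi.add_apply, Pi.smul_apply, Pi.neg_apply, smul_eq_mul, smul_smul, ← add_smul]
    ring_nf
  have hbsum : ∑ i, b i = ∑ i, g i + s := by
    simp [g, Finset.sum_add_distrib, ← Finset.mul_sum, hβsum]
  have : Nonempty ι := ⟨j⟩
  refine ⟨j, ?_, ?_, convexHull_range_update_subset ?_ j⟩
  · rw [hbB, hbsum, (convex_convexHull 𝕜 _).add_smul (Finset.sum_nonneg fun i _ => hg0 i) hs0]
    exact Set.add_mem_add (sum_smul_mem_smul_convexHull hg0 _)
      (Set.smul_mem_smul_set (subset_convexHull 𝕜 _ (Set.mem_range_self j)))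
  · rw [htβ]
    exact B.notMem_convexHull_range_update hβ0 hβsum (by simp [β, hb0 j])
  · rw [htβ]
    exact (convex_convexHull 𝕜 _).sum_mem (fun i _ => hβ0 i) hβsum
      fun i _ => subset_convexHull 𝕜 _ (Set.mem_range_self i)

end Simplex

namespace Paper

variable {n : ℕ}

@[simp] theorem Lq_add (a b : Fin n → ℤ) : Lq (a + b) = Lq a + Lq b := by
  ext; simp [Lq]

@[simp] theorem Lq_sub (a b : Fin n → ℤ) : Lq (a - b) = Lq a - Lq b := by
  ext; simp [Lq]

@[simp] theorem Lq_zero : Lq (0 : Fin n → ℤ) = 0 := by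
  ext; simp [Lq]

@[simp] theorem Lq_sum {ι : Type*} (s : Finset ι) (f : ι → Fin n → ℤ) :
    Lq (∑ i ∈ s, f i) = ∑ i ∈ s, Lq (f i) := by
  ext; simp [Lq]

theorem finite_preimage_Lq_convexHull {S : Set (Fin n → ℚ)} (hS : S.Finite) :
    (Lq ⁻¹' convexHull ℚ S).Finite := by
  obtain ⟨lo, hlo⟩ := hS.bddBelow
  obtain ⟨hi, hhi⟩ := hS.bddAbove
  have hbox : convexHull ℚ S ⊆ Set.Icc lo hi :=
    convexHull_min (fun x hx => ⟨hlo hx, hhi hx⟩) (convex_Icc lo hi)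
  refine (Set.finite_Icc (fun i => ⌊lo i⌋) (fun i => ⌈hi i⌉)).subset fun z hz => ?_
  obtain ⟨hzlo, hzhi⟩ := hbox hz
  exact ⟨fun i => (Int.floor_mono (hzlo i)).trans (Int.floor_intCast (z i)).le,
    fun i => (Int.ceil_intCast (z i)).ge.trans (Int.ceil_mono (hzhi i))⟩

theorem exists_lattice_sub_mem_of_one_le {C : Set (Fin n → ℚ)} {ι : Type*} [Fintype ι]
    {p : ι → Fin n → ℚ} (hp : Set.range p ⊆ Set.range Lq) {a : ι → ℚ} (ha : 0 ≤ a) {j : ι}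
    (hj : 1 ≤ a j) {v : Fin n → ℚ} (hv : v ∈ C) {z : Fin n → ℤ}
    (hz : Lq z = ∑ i, a i • p i + v) :
    ∃ y, Lq y ∈ convexHull ℚ (Set.range p) ∧
      Lq (z - y) ∈ (∑ i, a i - 1) • convexHull ℚ (Set.range p) + C := by
  obtain ⟨y, hy⟩ := hp (Set.mem_range_self j)
  refine ⟨y, hy ▸ subset_convexHull ℚ _ (Set.mem_range_self j), ?_⟩
  rw [Lq_sub, hz, hy]
  exact sum_smul_add_sub_mem_smul_convexHull_add ha hj p hv

theorem exists_smaller_lattice_simplex {ι : Type*} [Fintype ι] (B : AffineBasis ι ℚ (Fin n → ℚ))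
    (hB : Set.range B ⊆ Set.range Lq) {b : ι → ℚ} (hb0 : ∀ i, 0 < b i) (hb1 : ∀ i, b i ≤ 1)
    (hsum : ∑ i, b i + 1 = Fintype.card ι) {z : Fin n → ℤ} (hz : Lq z = ∑ i, b i • B i) :
    ∃ S ⊆ Set.range Lq, S.Finite ∧ convexHull ℚ S ⊆ convexHull ℚ (Set.range B) ∧
      Lq ⁻¹' convexHull ℚ S ⊂ Lq ⁻¹' convexHull ℚ (Set.range B) ∧
      Lq z ∈ (∑ i, b i) • convexHull ℚ S := by
  classical
  choose u hu using fun i => hB (Set.mem_range_self i)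
  have ht : ∑ i, b i • B i + Lq (∑ i, u i - z) = ∑ i, B i := by
    simp [hu, ← hz]
  obtain ⟨j, hzj, hj, hsub⟩ := B.exists_exchange_vertex hb0 hb1 hsum ht
  refine ⟨_, Set.range_subset_iff.2 fun i => ?_, Set.finite_range _, hsub,
    (Set.ssubset_iff_of_subset (Set.preimage_mono hsub)).2 ⟨u j, ?_, ?_⟩, hz ▸ hzj⟩
  · rcases eq_or_ne i j with rfl | h
    · simp only [Function.update_self, Set.mem_range_self]
    · simpa [h] using hB (Set.mem_range_self i)
  · simpa [hu j] using subset_convexHull ℚ _ (Set.mem_range_self j)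
  · simpa [hu j] using hj

theorem exists_lattice_sub_mem_smul_convexHull_add (C : PointedCone ℚ (Fin n → ℚ)) {c : ℕ}
    (hc : n ≤ c + 1) {S : Set (Fin n → ℚ)} (hS : S.Finite) (hSL : S ⊆ Set.range Lq)
    {z : Fin n → ℤ} (hz : Lq z ∈ ((c : ℚ) + 1) • convexHull ℚ S + C) :
    ∃ y, Lq y ∈ convexHull ℚ S ∧ Lq (z - y) ∈ (c : ℚ) • convexHull ℚ S + C := by
  induction hN : (Lq ⁻¹' convexHull ℚ S).ncard using Nat.strong_induction_on generalizing S with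
  | _ N ih =>
  obtain ⟨ι, _, p, a, hpS, hp, ha, hasum, v, hv, hzv⟩ :=
    exists_affineIndependent_of_mem_smul_convexHull_add (by positivity) hz
  have hmono : convexHull ℚ (Set.range p) ⊆ convexHull ℚ S := convexHull_mono hpS
  suffices ∃ y, Lq y ∈ convexHull ℚ (Set.range p) ∧
      Lq (z - y) ∈ (c : ℚ) • convexHull ℚ (Set.range p) + C by
    obtain ⟨y, hy, hzy⟩ := this
    exact ⟨y, hmono hy, Set.add_subset_add_right (Set.smul_set_mono hmono) hzy⟩
  have hpL := hpS.trans hSL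
  by_cases ha1 : ∃ j, 1 ≤ a j
  · obtain ⟨j, hj⟩ := ha1
    simpa [hasum] using exists_lattice_sub_mem_of_one_le hpL ha hj hv hzv
  simp only [not_exists, not_le] at ha1
  obtain ⟨hspan, hcard⟩ := hp.card_eq_of_forall_lt_one (by simpa using hc) ha1 hasum
  let B : AffineBasis ι ℚ (Fin n → ℚ) :=
    ⟨p, hp, hp.affineSpan_eq_top_iff_card_eq_finrank_add_one.2 hspan⟩
  obtain ⟨b, hb, hbsum, w, hw, hzw, hw0⟩ := B.absorb_into_weights ha hv
  rw [hasum] at hbsum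
  replace hzw : Lq z = ∑ i, b i • p i + w := hzv.trans hzw
  by_cases hb1 : ∃ j, 1 ≤ b j
  · obtain ⟨j, hj⟩ := hb1
    simpa [hbsum] using exists_lattice_sub_mem_of_one_le hpL hb hj hw hzw
  simp only [not_exists, not_le] at hb1
  have hbpos := pos_of_forall_lt_one hb1 (by rw [hbsum, hcard]; push_cast; ring) (by omega)
  obtain rfl : w = 0 := hw0.resolve_right fun ⟨i, hi⟩ => (hbpos i).ne' hi
  obtain ⟨S', hS'L, hS', hsub, hlt, hzS'⟩ := exists_smaller_lattice_simplex B hpL hbpos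
    (fun i => (hb1 i).le) (by rw [hbsum, hcard]; push_cast; ring) (by rwa [add_zero] at hzw)
  obtain ⟨y, hy, hzy⟩ := ih _ (hN ▸ Set.ncard_lt_ncard (hlt.trans_subset (Set.preimage_mono hmono))
    (finite_preimage_Lq_convexHull hS)) hS' hS'L
    ⟨_, hbsum ▸ hzS', 0, C.zero_mem, add_zero _⟩ rfl
  exact ⟨y, hsub hy, Set.add_subset_add_right (Set.smul_set_mono hsub) hzy⟩

theorem exists_lattice_sub_mem_add_smul_convexHull_add (C : PointedCone ℚ (Fin n → ℚ))
    {c : ℕ} (hc : n ≤ c + 1) {S : Set (Fin n → ℚ)} (hS : S.Finite) (hSL : S ⊆ Set.range Lq)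
    (k : ℕ) {z : Fin n → ℤ} (hz : Lq z ∈ ((c : ℚ) + k) • convexHull ℚ S + C) :
    ∃ y, Lq y ∈ (k : ℚ) • convexHull ℚ S ∧ Lq (z - y) ∈ (c : ℚ) • convexHull ℚ S + C := by
  induction k generalizing z with
  | zero =>
    obtain ⟨_, ⟨q, hq, -⟩, -⟩ := id hz
    refine ⟨0, ?_, by simpa using hz⟩
    rw [Nat.cast_zero, Set.zero_smul_set ⟨q, hq⟩, Lq_zero]
    exact Set.zero_mem_zero
  | succ k ih =>
    obtain ⟨y₁, hy₁, hzy₁⟩ := exists_lattice_sub_mem_smul_convexHull_add C (c := c + k)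
      (by omega) hS hSL (by push_cast at hz ⊢; rwa [add_assoc])
    obtain ⟨y₂, hy₂, hzy⟩ := ih (by push_cast at hzy₁; exact hzy₁)
    refine ⟨y₁ + y₂, ?_, by rwa [← sub_sub]⟩
    rw [Lq_add, Nat.cast_succ, add_comm (k : ℚ),
      (convex_convexHull ℚ S).add_smul zero_le_one k.cast_nonneg, one_smul]
    exact Set.add_mem_add hy₁ hy₂

theorem exists_lattice_decomposition (C : PointedCone ℚ (Fin n → ℚ)) {e : ℕ} (he : n ≤ e + 1)
    {S : Set (Fin n → ℚ)} (hS : S.Finite) (hSL : S ⊆ Set.range Lq) {s : ℕ} (hs : 1 ≤ s)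
    {z : Fin n → ℤ} (hz : Lq z ∈ ((s : ℚ) * e) • convexHull ℚ S + C) :
    ∃ f : Fin s → Fin n → ℤ, (∀ i, Lq (f i) ∈ (e : ℚ) • convexHull ℚ S + C) ∧ z = ∑ i, f i := by
  induction s, hs using Nat.le_induction generalizing z with
  | base => exact ⟨fun _ => z, fun _ => by simpa using hz, by simp⟩
  | succ s hs ih =>
    obtain ⟨y, hy, hzy⟩ := exists_lattice_sub_mem_add_smul_convexHull_add C (c := s * e)
      (by nlinarith) hS hSL e (by convert hz using 3; push_cast; ring)
    obtain ⟨f, hf, hfz⟩ := ih (by push_cast at hzy; exact hzy)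
    refine ⟨Fin.cons y f, fun i => ?_, by rw [Fin.sum_cons, ← hfz, add_sub_cancel]⟩
    cases i using Fin.cases with
    | zero => exact ⟨_, hy, 0, C.zero_mem, add_zero _⟩
    | succ i => simpa using hf i

theorem mink_add_cone (C : PointedCone ℚ (Fin n → ℚ)) {A : Set (Fin n → ℚ)} (hA : Convex ℚ A)
    (hA' : A.Nonempty) : ∀ k : ℕ, mink (C : Set (Fin n → ℚ)) (A + C) k = (k : ℚ) • A + C
  | 0 => by simp [mink, Set.zero_smul_set hA']
  | 1 => by simp [mink]
  | k + 2 => by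
    rw [mink, mink_add_cone C hA hA' (k + 1), add_add_add_comm, coe_add_coe]
    nth_rw 2 [← one_smul ℚ A]
    rw [← hA.add_smul (by positivity) zero_le_one]
    push_cast
    ring_nf

theorem sum_mem_mink {σv P : Set (Fin n → ℚ)} {s : ℕ} (hs : 1 ≤ s) {f : Fin s → Fin n → ℚ}
    (hf : ∀ i, f i ∈ P) : ∑ i, f i ∈ mink σv P s := by
  induction s, hs using Nat.le_induction with
  | base => simpa [mink] using hf 0
  | succ s hs ih =>
    obtain ⟨k, rfl⟩ := Nat.exists_eq_add_of_le' hs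
    rw [Fin.sum_univ_castSucc]
    exact Set.add_mem_add (ih fun i => hf _) (hf _)

theorem coe_dual_dotProductBilin (σ : Set (Fin n → ℚ)) :
    (PointedCone.dual (dotProductBilin ℚ ℚ) σ : Set (Fin n → ℚ)) = dualCone σ := by
  ext m
  simp [dualCone, dot, dotProduct, mul_comm]

theorem statement12_general {n : ℕ} (σ : Set (Fin n → ℚ))
    (P : Set (Fin n → ℚ)) (hP : IsIntegralPoly (dualCone σ) P)
    (e : ℕ) (he : n - 1 ≤ e) :
    ∀ s : ℕ, 1 ≤ s → ∀ m : Fin n → ℤ,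
      Lq m ∈ mink (dualCone σ) (mink (dualCone σ) P e) s ↔
        ∃ f : Fin s → (Fin n → ℤ),
          (∀ i, Lq (f i) ∈ mink (dualCone σ) P e) ∧ m = ∑ i, f i := by
  intro s hs m
  obtain ⟨F, hF, rfl⟩ := hP
  have hQ : (convexHull ℚ (Lq '' (F : Set (Fin n → ℤ)))).Nonempty :=
    ((Finset.coe_nonempty.2 hF).image Lq).mono (subset_convexHull ℚ _)
  rw [← coe_dual_dotProductBilin σ, mink_add_cone _ (convex_convexHull ℚ _) hQ e]
  constructor
  · intro hm
    rw [mink_add_cone _ ((convex_convexHull ℚ _).smul _) hQ.smul_set, smul_smul] at hm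
    exact exists_lattice_decomposition _ (by omega) (F.finite_toSet.image _)
      (Set.image_subset_range _ _) hs hm
  · rintro ⟨f, hf, rfl⟩
    rw [Lq_sum]
    exact sum_mem_mink hs hf

/-- if `σ ⊆ ℚⁿ` is an `n`-dimensional pointed polyhedral cone and `P` an
integral `σ∨`-polyhedron, then for every `e ≥ n - 1` the polyhedron `eP` is normal:
every lattice point of `s·(eP)` is a sum of `s` lattice points of `eP`, for all `s ≥ 1`. -/
theorem statement12 {n : ℕ} (σ : Set (Fin n → ℚ))
    (hσ : IsPolyhedralCone σ) (hσp : Pointed σ)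
    (hdim : Submodule.span ℚ σ = ⊤)
    (P : Set (Fin n → ℚ)) (hP : IsIntegralPoly (dualCone σ) P)
    (e : ℕ) (he : n - 1 ≤ e) :
    ∀ s : ℕ, 1 ≤ s → ∀ m : Fin n → ℤ,
      Lq m ∈ mink (dualCone σ) (mink (dualCone σ) P e) s ↔
        ∃ f : Fin s → (Fin n → ℤ),
          (∀ i, Lq (f i) ∈ mink (dualCone σ) P e) ∧ m = ∑ i, f i :=
  statement12_general σ P hP e he

end Paper
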